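/- Let k ≥ 1 and let σ be a separable state on ℂᵏ ⊗ ℂᵏ, i.e., σ = ∑_{l∈s} p_l (ρ_l ⊗ τ_l) for a finite index set s, nonnegative reals p_l with ∑_l p_l = 1, and k×k positive semidefinite trace-one complex matrices ρ_l, τ_l, where ⊗ is the Kronecker product. Then Re tr(Φ_k · σ) ≤ 1/k. -/

import Mathlib

/-! `k · tr(Φ_k (ρ ⊗ τ)) = tr(ρ τᵀ)`, and `τᵀ` is again positive semidefinite. For positive
semidefinite `A = XᴴX` and `B = YᴴY` one has `tr(AB) = ‖XYᴴ‖²`, so submultiplicativity of the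
Frobenius norm gives `Re tr(AB) ≤ ‖X‖² ‖Y‖² = tr A · tr B`. Hence every product state has overlap
at most `1/k` with `Φ_k`, and so does every convex combination of them. -/

open scoped Kronecker ComplexOrder

/-- The maximally entangled matrix `Φ_k = (1/k) ∑_{i,j} |ii⟩⟨jj|`. -/
noncomputable def maxEnt (k : ℕ) : Matrix (Fin k × Fin k) (Fin k × Fin k) ℂ :=
  fun p q => if p.1 = p.2 ∧ q.1 = q.2 then (k : ℂ)⁻¹ else 0

namespace Matrix

open scoped Matrix.Norms.Frobenius

variable {𝕜 : Type*} [RCLike 𝕜] {m n : Type*} [Fintype m] [Fintype n]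

theorem frobenius_norm_sq_eq_re_trace (M : Matrix m n 𝕜) :
    ‖M‖ ^ 2 = RCLike.re (Mᴴ * M).trace := by
  rw [frobenius_norm_def, ← Real.rpow_natCast, ← Real.rpow_mul (by positivity)]
  norm_num [trace, mul_apply, Finset.sum_comm (γ := m), RCLike.conj_mul]

theorem trace_conjTranspose_mul_self_mul_conjTranspose_mul_self (X Y : Matrix n n 𝕜) :
    (Xᴴ * X * (Yᴴ * Y)).trace = ((X * Yᴴ)ᴴ * (X * Yᴴ)).trace := by
  rw [conjTranspose_mul, conjTranspose_conjTranspose, Matrix.mul_assoc Y, trace_mul_comm Y]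
  simp only [Matrix.mul_assoc]

theorem PosSemidef.re_trace_mul_le {A B : Matrix n n 𝕜} (hA : A.PosSemidef) (hB : B.PosSemidef) :
    RCLike.re (A * B).trace ≤ RCLike.re A.trace * RCLike.re B.trace := by
  classical
  open scoped MatrixOrder in
  obtain ⟨X, rfl⟩ := CStarAlgebra.nonneg_iff_eq_star_mul_self.mp hA.nonneg
  open scoped MatrixOrder in
  obtain ⟨Y, rfl⟩ := CStarAlgebra.nonneg_iff_eq_star_mul_self.mp hB.nonneg
  simp only [star_eq_conjTranspose]
  rw [trace_conjTranspose_mul_self_mul_conjTranspose_mul_self, ← frobenius_norm_sq_eq_re_trace,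
    ← frobenius_norm_sq_eq_re_trace, ← frobenius_norm_sq_eq_re_trace, ← mul_pow,
    ← frobenius_norm_conjTranspose Y]
  gcongr
  exact frobenius_norm_mul _ _

end Matrix

open Matrix

theorem trace_maxEnt_mul_kronecker {k : ℕ} (A B : Matrix (Fin k) (Fin k) ℂ) :
    (maxEnt k * (A ⊗ₖ B)).trace = (k : ℂ)⁻¹ * (A * Bᵀ).trace := by
  simp only [trace, diag_apply, mul_apply, maxEnt, ite_and, kroneckerMap_apply, ite_mul,
    zero_mul, Finset.sum_ite_irrel, Fintype.sum_prod_type, Finset.sum_ite_eq, Finset.mem_univ,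
    ↓reduceIte, Finset.sum_const_zero, transpose_apply, Finset.mul_sum]
  exact Finset.sum_comm

theorem re_trace_maxEnt_mul_kronecker_le {k : ℕ} {A B : Matrix (Fin k) (Fin k) ℂ}
    (hA : A.PosSemidef) (hB : B.PosSemidef) :
    (maxEnt k * (A ⊗ₖ B)).trace.re ≤ A.trace.re * B.trace.re / k := by
  rw [trace_maxEnt_mul_kronecker, ← Complex.ofReal_natCast, ← Complex.ofReal_inv,
    Complex.re_ofReal_mul, inv_mul_eq_div, ← trace_transpose B]
  gcongr
  exact hA.re_trace_mul_le hB.transpose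

theorem trace_maxEnt_separable_le_general {k : ℕ} {ι : Type*} (s : Finset ι)
    (p : ι → ℝ) (ρ τ : ι → Matrix (Fin k) (Fin k) ℂ)
    (hp : ∀ l ∈ s, 0 ≤ p l) (hpsum : ∑ l ∈ s, p l = 1)
    (hρ : ∀ l ∈ s, (ρ l).PosSemidef ∧ (ρ l).trace = 1)
    (hτ : ∀ l ∈ s, (τ l).PosSemidef ∧ (τ l).trace = 1)
    (σ : Matrix (Fin k × Fin k) (Fin k × Fin k) ℂ)
    (hσ : σ = ∑ l ∈ s, p l • (ρ l ⊗ₖ τ l)) :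
    ((maxEnt k * σ).trace).re ≤ 1 / k := by
  have hproduct : ∀ l ∈ s, (maxEnt k * (ρ l ⊗ₖ τ l)).trace.re ≤ 1 / k := fun l hl => by
    simpa [(hρ l hl).2, (hτ l hl).2] using
      re_trace_maxEnt_mul_kronecker_le (k := k) (hρ l hl).1 (hτ l hl).1
  calc ((maxEnt k * σ).trace).re
      = ∑ l ∈ s, p l * (maxEnt k * (ρ l ⊗ₖ τ l)).trace.re := by
        simp [hσ, Matrix.mul_sum, trace_sum, Complex.re_sum]
    _ ≤ ∑ l ∈ s, p l * (1 / k) := by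
        gcongr with l hl
        · exact hp l hl
        · exact hproduct l hl
    _ = 1 / k := by rw [← Finset.sum_mul, hpsum, one_mul]

/-- For any separable state `σ = ∑_l p_l (ρ_l ⊗ τ_l)` on `ℂᵏ ⊗ ℂᵏ`, the overlap with the
maximally entangled state satisfies `Re tr(Φ_k σ) ≤ 1/k`. -/
theorem trace_maxEnt_separable_le {k : ℕ} (hk : 1 ≤ k) {ι : Type*} (s : Finset ι)
    (p : ι → ℝ) (ρ τ : ι → Matrix (Fin k) (Fin k) ℂ)
    (hp : ∀ l ∈ s, 0 ≤ p l) (hpsum : ∑ l ∈ s, p l = 1)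
    (hρ : ∀ l ∈ s, (ρ l).PosSemidef ∧ (ρ l).trace = 1)
    (hτ : ∀ l ∈ s, (τ l).PosSemidef ∧ (τ l).trace = 1)
    (σ : Matrix (Fin k × Fin k) (Fin k × Fin k) ℂ)
    (hσ : σ = ∑ l ∈ s, p l • (ρ l ⊗ₖ τ l)) :
    ((maxEnt k * σ).trace).re ≤ 1 / k :=
  trace_maxEnt_separable_le_general s p ρ τ hp hpsum hρ hτ σ hσ
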